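/- If two Heisenberg-Weyl displacement amplitudes α, α' satisfy |α×α'| = (π/2)(2n+1) for some nonnegative integer n, then the corresponding Heisenberg-Weyl observables anticommute: Q(α)Q(α') + Q(α')Q(α) = 0. -/

import Mathlib

open Matrix Complex BigOperators

/-- The clock operator `Z` on `ℂ^d`: `Z|j⟩ = e^{2πij/d}|j⟩`. -/
noncomputable def Zmat (d : ℕ) : Matrix (Fin d) (Fin d) ℂ :=
  Matrix.diagonal fun j => Complex.exp (2 * (Real.pi : ℂ) * Complex.I * ((j : ℕ) : ℂ) / (d : ℂ))

/-- The shift operator `X` on `ℂ^d`: `X|j⟩ = |j+1 mod d⟩`. -/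
noncomputable def Xmat (d : ℕ) [NeZero d] : Matrix (Fin d) (Fin d) ℂ :=
  Matrix.of fun j k : Fin d => if j = k + 1 then 1 else 0

/-- Discrete Heisenberg–Weyl displacement operator `D(l,m) = Z^l X^m e^{-iπlm/d}`. -/
noncomputable def Dmat (d : ℕ) [NeZero d] (l m : ℕ) : Matrix (Fin d) (Fin d) ℂ :=
  Complex.exp (-((Real.pi : ℂ) * Complex.I * (l : ℂ) * (m : ℂ) / (d : ℂ))) • (Zmat d ^ l * Xmat d ^ m)

/-- Heisenberg–Weyl observable `Q(l,m) = χ D(l,m) + χ* D(l,m)†` with `χ = (1+i)/2`. -/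
noncomputable def Qmat (d : ℕ) [NeZero d] (l m : ℕ) : Matrix (Fin d) (Fin d) ℂ :=
  ((1 + Complex.I) / 2) • Dmat d l m + ((1 - Complex.I) / 2) • (Dmat d l m)ᴴ

/-- Displacement amplitude `α = √(π/d) (m + i l)` in discrete phase space. -/
noncomputable def amp (d l m : ℕ) : ℂ :=
  ((Real.sqrt (Real.pi / d) : ℝ) : ℂ) * ((m : ℂ) + (l : ℂ) * Complex.I)

/-- The phase-space cross product `α × α' = Im (α conj(α'))`. -/
noncomputable def ampCross (d l m l' m' : ℕ) : ℝ :=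
  (amp d l m * (starRingEnd ℂ) (amp d l' m')).im

/-!
With `ω = e^{2πi/d}` the clock and shift matrices satisfy `Z X = ω X Z`, so the monomials
`Z^l X^m` and `Z^{l'} X^{m'}` commute up to the phase `ω^{l m' - l' m}`. The cross-product
condition says that `2 (l m' - l' m)` is an odd multiple of `d`, which makes this phase `-1`:
the displacement operators anticommute. They are unitary, and conjugating by a unitary carries
the anticommutation over to their adjoints, hence to the combinations `Q = χ D + χ* D†`.
-/

def Anticommute {R : Type*} [Mul R] [Add R] [Zero R] (a b : R) : Prop :=
  a * b + b * a = 0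

namespace Anticommute

variable {R : Type*}

theorem symm [AddCommMagma R] [Mul R] [Zero R] {a b : R} (h : Anticommute a b) :
    Anticommute b a := by
  rwa [Anticommute, add_comm]

theorem add_left [NonUnitalNonAssocSemiring R] {a b c : R} (ha : Anticommute a c)
    (hb : Anticommute b c) : Anticommute (a + b) c := by
  unfold Anticommute at *
  rw [add_mul, mul_add, add_add_add_comm, ha, hb, add_zero]

theorem add_right [NonUnitalNonAssocSemiring R] {a b c : R} (hb : Anticommute a b)
    (hc : Anticommute a c) : Anticommute a (b + c) :=
  (hb.symm.add_left hc.symm).symm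

theorem smul_left {S : Type*} [CommSemiring S] [Semiring R] [Algebra S R] {a b : R}
    (h : Anticommute a b) (s : S) : Anticommute (s • a) b := by
  unfold Anticommute at *
  rw [smul_mul_assoc, mul_smul_comm, ← smul_add, h, smul_zero]

theorem smul_right {S : Type*} [CommSemiring S] [Semiring R] [Algebra S R] {a b : R}
    (h : Anticommute a b) (s : S) : Anticommute a (s • b) :=
  (h.symm.smul_left s).symm

theorem star_star [NonUnitalNonAssocSemiring R] [StarRing R] {a b : R} (h : Anticommute a b) :
    Anticommute (star a) (star b) := by
  unfold Anticommute at *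
  rw [← star_mul, ← star_mul, add_comm, ← star_add, h, star_zero]

theorem star_left_of_mem_unitary [Semiring R] [StarMul R] {u b : R} (hu : u ∈ unitary R)
    (h : Anticommute u b) : Anticommute (star u) b := by
  unfold Anticommute at *
  calc star u * b + b * star u
      = star u * (b * u + u * b) * star u := by
        simp only [mul_add, add_mul, mul_assoc, Unitary.mul_star_self_of_mem hu, mul_one]
        rw [← mul_assoc (star u) u, Unitary.star_mul_self_of_mem hu, one_mul]
    _ = 0 := by rw [add_comm, h, mul_zero, zero_mul]

theorem smul_add_smul_star_of_mem_unitary {S : Type*} [CommSemiring S] [Semiring R] [StarRing R]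
    [Algebra S R] {u v : R} (hu : u ∈ unitary R) (hv : v ∈ unitary R) (h : Anticommute u v)
    (s s' t t' : S) : Anticommute (s • u + s' • star u) (t • v + t' • star v) := by
  have h₂ : Anticommute u (star v) := (h.symm.star_left_of_mem_unitary hv).symm
  have h₃ : Anticommute (star u) v := h.star_left_of_mem_unitary hu
  refine .add_left (.add_right ?_ ?_) (.add_right ?_ ?_)
  exacts [(h.smul_left s).smul_right t, (h₂.smul_left s).smul_right t',
    (h₃.smul_left s').smul_right t, (h.star_star.smul_left s').smul_right t']

end Anticommute

theorem mul_pow_eq_smul_of_mul_eq_smul {S R : Type*} [CommSemiring S] [Semiring R] [Algebra S R]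
    {x y : R} {c : S} (h : x * y = c • (y * x)) (b : ℕ) :
    x * y ^ b = c ^ b • (y ^ b * x) := by
  induction b with
  | zero => simp
  | succ b ih =>
    rw [pow_succ, ← mul_assoc, ih, smul_mul_assoc, mul_assoc, h, mul_smul_comm, smul_smul,
      pow_succ, mul_assoc]

theorem pow_mul_pow_eq_smul_of_mul_eq_smul {S R : Type*} [CommSemiring S] [Semiring R]
    [Algebra S R] {x y : R} {c : S} (h : x * y = c • (y * x)) (a b : ℕ) :
    x ^ a * y ^ b = c ^ (a * b) • (y ^ b * x ^ a) := by
  induction a with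
  | zero => simp
  | succ a ih =>
    rw [pow_succ, mul_assoc, mul_pow_eq_smul_of_mul_eq_smul h, mul_smul_comm, ← mul_assoc, ih,
      smul_mul_assoc, smul_smul, mul_assoc, ← pow_succ, ← pow_add, add_mul, one_mul, add_comm b]

theorem Anticommute.pow_mul_pow_of_mul_eq_smul {K R : Type*} [Field K] [Ring R] [Algebra K R]
    {x y : R} {c : K} (h : x * y = c • (y * x)) (hc : c ≠ 0) {a b a' b' : ℕ}
    (hab : c ^ (a * b') = -c ^ (a' * b)) : Anticommute (x ^ a * y ^ b) (x ^ a' * y ^ b') := by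
  have reorder : ∀ a b a' b' : ℕ,
      c ^ (a' * b) • (x ^ a * y ^ b * (x ^ a' * y ^ b')) = x ^ (a + a') * y ^ (b + b') := by
    intro a b a' b'
    calc c ^ (a' * b) • (x ^ a * y ^ b * (x ^ a' * y ^ b'))
        = x ^ a * (x ^ a' * y ^ b * y ^ b') := by
          rw [pow_mul_pow_eq_smul_of_mul_eq_smul h a' b]
          simp only [smul_mul_assoc, mul_smul_comm, mul_assoc]
      _ = x ^ (a + a') * y ^ (b + b') := by
          rw [← mul_assoc, ← mul_assoc, ← pow_add, mul_assoc, ← pow_add]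
  have hunit : IsUnit (c ^ (a' * b)) := (pow_ne_zero _ hc).isUnit
  rw [Anticommute, ← hunit.smul_eq_zero, smul_add, reorder, ← neg_neg (c ^ (a' * b)), ← hab,
    neg_smul, reorder, add_comm a', add_comm b', add_neg_cancel]

theorem Complex.exp_mem_unitary_of_conj_eq_neg {z : ℂ} (hz : (starRingEnd ℂ) z = -z) :
    Complex.exp z ∈ unitary ℂ := by
  rw [Unitary.mem_iff_star_mul_self, Complex.star_def, ← Complex.exp_conj, hz, Complex.exp_neg,
    inv_mul_cancel₀ (Complex.exp_ne_zero z)]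

theorem Matrix.diagonal_mem_unitary {n α : Type*} [Fintype n] [DecidableEq n] [Semiring α]
    [StarRing α] {v : n → α} (hv : ∀ i, v i ∈ unitary α) :
    diagonal v ∈ unitary (Matrix n n α) := by
  rw [Unitary.mem_iff, star_eq_conjTranspose, diagonal_conjTranspose, diagonal_mul_diagonal,
    diagonal_mul_diagonal, ← diagonal_one]
  exact ⟨congrArg diagonal (funext fun i => Unitary.star_mul_self_of_mem (hv i)),
    congrArg diagonal (funext fun i => Unitary.mul_star_self_of_mem (hv i))⟩

theorem Equiv.Perm.permMatrix_mem_unitary {n α : Type*} [Fintype n] [DecidableEq n] [Semiring α]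
    [StarRing α] (σ : Equiv.Perm n) : σ.permMatrix α ∈ unitary (Matrix n n α) := by
  rw [Unitary.mem_iff, star_eq_conjTranspose, conjTranspose_permMatrix, ← permMatrix_mul,
    ← permMatrix_mul, mul_inv_cancel, inv_mul_cancel, permMatrix_one]
  exact ⟨rfl, rfl⟩

noncomputable def clockRoot (d : ℕ) : ℂ :=
  Complex.exp (2 * Real.pi * I / d)

theorem clockRoot_pow_self (d : ℕ) [NeZero d] : clockRoot d ^ d = 1 :=
  (Complex.isPrimitiveRoot_exp d (NeZero.ne d)).pow_eq_one

theorem clockRoot_ne_zero (d : ℕ) : clockRoot d ≠ 0 :=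
  Complex.exp_ne_zero _

theorem clockRoot_mem_unitary (d : ℕ) : clockRoot d ∈ unitary ℂ :=
  Complex.exp_mem_unitary_of_conj_eq_neg (by simp [map_ofNat, neg_div])

theorem Zmat_eq_diagonal (d : ℕ) :
    Zmat d = diagonal fun j : Fin d => clockRoot d ^ (j : ℕ) := by
  unfold Zmat clockRoot
  congr 1
  funext j
  rw [← Complex.exp_nat_mul]
  ring_nf

theorem Xmat_eq_permMatrix (d : ℕ) [NeZero d] :
    Xmat d = Equiv.Perm.permMatrix ℂ (Equiv.subRight 1) := by
  ext j k
  simp [Xmat, sub_eq_iff_eq_add]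

theorem Zmat_mul_Xmat (d : ℕ) [NeZero d] :
    Zmat d * Xmat d = clockRoot d • (Xmat d * Zmat d) := by
  ext j k
  simp only [Zmat_eq_diagonal, diagonal_mul, mul_diagonal, Matrix.smul_apply, Xmat, of_apply,
    smul_eq_mul]
  split_ifs with hjk
  · rw [mul_one, one_mul, hjk, ← pow_succ', pow_eq_pow_mod (k.val + 1) (clockRoot_pow_self d),
      Fin.val_add, Fin.val_one', Nat.add_mod_mod]
  · simp

theorem Dmat_mem_unitary (d : ℕ) [NeZero d] (l m : ℕ) :
    Dmat d l m ∈ unitary (Matrix (Fin d) (Fin d) ℂ) := by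
  have hphase : Complex.exp (-((Real.pi : ℂ) * I * l * m / d)) ∈ unitary ℂ :=
    Complex.exp_mem_unitary_of_conj_eq_neg (by simp [neg_div])
  refine Unitary.smul_mem_of_mem hphase (mul_mem (pow_mem ?_ _) (pow_mem ?_ _))
  · rw [Zmat_eq_diagonal]
    exact diagonal_mem_unitary fun j => pow_mem (clockRoot_mem_unitary d) _
  · rw [Xmat_eq_permMatrix]
    exact Equiv.Perm.permMatrix_mem_unitary _

theorem Dmat_anticommute (d : ℕ) [NeZero d] {l m l' m' : ℕ}
    (h : clockRoot d ^ (l * m') = -clockRoot d ^ (l' * m)) :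
    Anticommute (Dmat d l m) (Dmat d l' m') :=
  ((Anticommute.pow_mul_pow_of_mul_eq_smul (Zmat_mul_Xmat d) (clockRoot_ne_zero d) h).smul_left
    _).smul_right _

theorem Qmat_anticommute (d : ℕ) [NeZero d] {l m l' m' : ℕ}
    (h : clockRoot d ^ (l * m') = -clockRoot d ^ (l' * m)) :
    Anticommute (Qmat d l m) (Qmat d l' m') :=
  (Dmat_anticommute d h).smul_add_smul_star_of_mem_unitary (Dmat_mem_unitary d l m)
    (Dmat_mem_unitary d l' m') _ _ _ _

theorem ampCross_eq (d l m l' m' : ℕ) :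
    ampCross d l m l' m' = Real.pi / d * (l * m' - m * l') := by
  have hsq : Real.sqrt (Real.pi / d) * Real.sqrt (Real.pi / d) = Real.pi / d :=
    Real.mul_self_sqrt (by positivity)
  simp only [ampCross, amp, map_mul, Complex.conj_ofReal, map_add, map_natCast, Complex.conj_I,
    Complex.mul_im, Complex.mul_re, Complex.ofReal_re, Complex.ofReal_im, Complex.add_re,
    Complex.add_im, Complex.natCast_re, Complex.natCast_im, Complex.I_re, Complex.I_im,
    Complex.neg_re, Complex.neg_im]
  linear_combination ((l : ℝ) * m' - m * l') * hsq

theorem clockRoot_pow_eq_neg_pow (d : ℕ) [NeZero d] {p q : ℕ} {k : ℤ}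
    (h : 2 * ((p : ℤ) - q) = d * (2 * k + 1)) : clockRoot d ^ p = -clockRoot d ^ q := by
  have hd : (d : ℂ) ≠ 0 := Nat.cast_ne_zero.mpr (NeZero.ne d)
  have harg : p * (2 * Real.pi * I / d) = q * (2 * Real.pi * I / d) + k * (2 * Real.pi * I)
      + Real.pi * I := by
    have h' : (2 * ((p : ℤ) - q) : ℂ) = (d * (2 * k + 1) : ℤ) := by exact_mod_cast h
    push_cast at h'
    field_simp
    linear_combination h'
  rw [clockRoot, ← Complex.exp_nat_mul, harg, Complex.exp_add, Complex.exp_add,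
    Complex.exp_int_mul_two_pi_mul_I, Complex.exp_pi_mul_I, ← Complex.exp_nat_mul]
  ring

theorem exists_two_mul_sub_eq_odd_of_abs_ampCross {d l m l' m' n : ℕ} [NeZero d]
    (h : |ampCross d l m l' m'| = Real.pi / 2 * (2 * n + 1)) :
    ∃ k : ℤ, 2 * (((l * m' : ℕ) : ℤ) - (l' * m : ℕ)) = d * (2 * k + 1) := by
  have hd : (0 : ℝ) < d := Nat.cast_pos.mpr (NeZero.pos d)
  rw [ampCross_eq, abs_mul, abs_of_pos (by positivity)] at h
  have habs : 2 * |(l * m' - m * l' : ℝ)| = d * (2 * n + 1) := by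
    field_simp at h
    linarith
  rcases abs_choice (l * m' - m * l' : ℝ) with hs | hs
  · refine ⟨n, ?_⟩
    have hk : 2 * ((l * m' : ℝ) - l' * m) = d * (2 * (n : ℤ) + 1) := by push_cast; linarith
    exact_mod_cast hk
  · refine ⟨-n - 1, ?_⟩
    have hk : 2 * ((l * m' : ℝ) - l' * m) = d * (2 * (-n - 1 : ℤ) + 1) := by push_cast; linarith
    exact_mod_cast hk

/-- If `|α × α'| = (π/2)(2n+1)` for some `n ∈ ℕ`, then the corresponding
Heisenberg–Weyl observables anticommute. -/
theorem HW_anticommute_of_cross (d : ℕ) [NeZero d] (l m l' m' : Fin d) (n : ℕ)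
    (h : |ampCross d l m l' m'| = Real.pi / 2 * (2 * n + 1)) :
    Qmat d l m * Qmat d l' m' + Qmat d l' m' * Qmat d l m = 0 := by
  obtain ⟨k, hk⟩ := exists_two_mul_sub_eq_odd_of_abs_ampCross h
  exact Qmat_anticommute d (clockRoot_pow_eq_neg_pow d hk)
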